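/- Let M be a nonnegative kernel on a finite set S with x^{3/2}M_{α,β}(x) → L_{α,β} as x → ∞ and such that the matrix B of total masses has spectral radius strictly less than 1. Then Z_{α,β}(x) := Σ_{k≥1}[M^{*k}]_{α,β}(x) satisfies x^{3/2} Z_{α,β}(x) → [(1−B)^{-1} · L · (1−B)^{-1}]_{α,β} as x → ∞. -/

import Mathlib

open Filter Matrix

/-- Convolution of two matrix-valued kernels on `ℕ`. -/
noncomputable def kconv {S : Type*} [Fintype S]
    (F G : ℕ → Matrix S S ℝ) : ℕ → Matrix S S ℝ :=
  fun x => ∑ y ∈ Finset.range (x + 1), F y * G (x - y)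

/-- `n`-fold convolution power of a kernel; `kpow M 0` is the identity kernel
concentrated at `x = 0`. -/
noncomputable def kpow {S : Type*} [Fintype S] [DecidableEq S]
    (M : ℕ → Matrix S S ℝ) : ℕ → ℕ → Matrix S S ℝ
  | 0 => fun x => if x = 0 then 1 else 0
  | n + 1 => kconv M (kpow M n)

/-!
For kernels `F`, `G` with total masses `A`, `B` and `x ^ s F(x) → L_F`, `x ^ s G(x) → L_G`,
split `(F * G)(x) = ∑_y F(y) G(x - y)` at `y = x / 2`. Where `y ≤ x / 2` we have
`x ^ s ≤ 2 ^ s (x - y) ^ s`, so `x ^ s F(y) G(x - y)` is dominated by a multiple of `|F(y)|` and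
tends to `F(y) L_G` for each fixed `y`; dominated convergence gives `A L_G`, and the other half
gives `L_F B` in the same way. By induction `x ^ s M^{*k}(x) → ∑_{i<k} B^i L B^{k-1-i}`.

To sum over `k`, bound `x ^ s M^{*k}(x) ≤ k ^ s ∑_{i<k} B^i J B^{k-1-i}` entrywise, where `J`
bounds `x ^ s M(x)`. As `B^i = O(ρ^i)` the right side is `O(k^(s+1) ρ^k)`, which is summable, so
dominated convergence applies once more, and `∑_k ∑_{i+j=k} B^i L B^j` is the Cauchy product
`R L R`.
-/
open Topology Finset

theorem tendsto_rpow_mul_comp_sub {g : ℕ → ℝ} {s ℓ : ℝ}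
    (hg : Tendsto (fun x : ℕ => (x : ℝ) ^ s * g x) atTop (𝓝 ℓ)) (y : ℕ) :
    Tendsto (fun x : ℕ => (x : ℝ) ^ s * g (x - y)) atTop (𝓝 ℓ) := by
  rw [← tendsto_add_atTop_iff_nat y]
  have hratio : Tendsto (fun n : ℕ => (((n : ℝ) + y) / n) ^ s) atTop (𝓝 1) := by
    simpa only [inv_div, inv_one, Real.one_rpow] using
      ((tendsto_natCast_div_add_atTop (y : ℝ)).inv₀ one_ne_zero).rpow_const (p := s)
        (Or.inl (by norm_num))
  refine (one_mul ℓ ▸ hratio.mul hg).congr' ?_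
  filter_upwards [eventually_ge_atTop 1] with n hn
  have hn' : (0 : ℝ) < n := by exact_mod_cast hn
  rw [Nat.add_sub_cancel, Real.div_rpow (by positivity) hn'.le, ← mul_assoc,
    div_mul_cancel₀ _ (Real.rpow_pos_of_pos hn' s).ne']
  push_cast
  rfl

theorem tendsto_rpow_mul_sum_filter_mul {f g : ℕ → ℝ} {a ℓ s : ℝ} (hs : 0 ≤ s)
    (hf : HasSum f a) (hg : Tendsto (fun x : ℕ => (x : ℝ) ^ s * g x) atTop (𝓝 ℓ))
    (p : ℕ → ℕ → Prop) [∀ x, DecidablePred (p x)] (hp : ∀ x y, p x y → 2 * y ≤ x)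
    (hp_eventually : ∀ y, ∀ᶠ x in atTop, p x y) :
    Tendsto (fun x : ℕ => (x : ℝ) ^ s * ∑ y ∈ range (x + 1) with p x y, f y * g (x - y))
      atTop (𝓝 (a * ℓ)) := by
  obtain ⟨K, hK⟩ := hg.abs.bddAbove_range
  set φ : ℕ → ℕ → ℝ := fun x y => if p x y then (x : ℝ) ^ s * (f y * g (x - y)) else 0
  have hφ : ∀ x : ℕ,
      (x : ℝ) ^ s * ∑ y ∈ range (x + 1) with p x y, f y * g (x - y) = ∑' y, φ x y := by
    intro x
    rw [tsum_eq_sum (s := range (x + 1)), sum_filter, mul_sum]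
    · simp only [φ, mul_ite, mul_zero]
    · intro y hy
      have : ¬ p x y := fun h => hy (mem_range.2 (by have := hp x y h; omega))
      simp [φ, this]
  have hlim : ∀ y, Tendsto (fun x => φ x y) atTop (𝓝 (f y * ℓ)) := fun y =>
    ((tendsto_rpow_mul_comp_sub hg y).const_mul (f y)).congr' <|
      (hp_eventually y).mono fun x hx => by simp only [φ, if_pos hx]; ring
  have hbound : ∀ x y, ‖φ x y‖ ≤ |f y| * (2 ^ s * K) := by
    intro x y
    have hK0 : 0 ≤ K := (abs_nonneg _).trans (hK ⟨0, rfl⟩)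
    by_cases h : p x y
    · have h2 := hp x y h
      have hx : (x : ℝ) ^ s ≤ 2 ^ s * ((x - y : ℕ) : ℝ) ^ s := by
        rw [← Real.mul_rpow (by norm_num) (by positivity)]
        refine Real.rpow_le_rpow (by positivity) ?_ hs
        rw [Nat.cast_sub (by omega)]
        have : (2 * y : ℝ) ≤ x := by exact_mod_cast h2
        linarith
      have hKxy : ((x - y : ℕ) : ℝ) ^ s * |g (x - y)| ≤ K := by
        simpa [abs_mul, abs_of_nonneg (Real.rpow_nonneg (Nat.cast_nonneg _) s)] using
          hK ⟨x - y, rfl⟩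
      simp only [φ, if_pos h, Real.norm_eq_abs, abs_mul,
        abs_of_nonneg (Real.rpow_nonneg (Nat.cast_nonneg x) s)]
      calc (x : ℝ) ^ s * (|f y| * |g (x - y)|) = |f y| * ((x : ℝ) ^ s * |g (x - y)|) := by ring
        _ ≤ |f y| * ((2 : ℝ) ^ s * ((x - y : ℕ) : ℝ) ^ s * |g (x - y)|) := by gcongr
        _ ≤ |f y| * ((2 : ℝ) ^ s * K) := by rw [mul_assoc]; gcongr
    · simp only [φ, if_neg h, norm_zero]
      positivity
  have := tendsto_tsum_of_dominated_convergence (hf.summable.abs.mul_right _) hlim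
    (Eventually.of_forall hbound)
  rw [(hf.mul_right ℓ).tsum_eq] at this
  exact this.congr fun x => (hφ x).symm

theorem tendsto_rpow_mul_sum_range_mul {f g : ℕ → ℝ} {a b ℓf ℓg s : ℝ} (hs : 0 ≤ s)
    (hf : HasSum f a) (hg : HasSum g b)
    (hfl : Tendsto (fun x : ℕ => (x : ℝ) ^ s * f x) atTop (𝓝 ℓf))
    (hgl : Tendsto (fun x : ℕ => (x : ℝ) ^ s * g x) atTop (𝓝 ℓg)) :
    Tendsto (fun x : ℕ => (x : ℝ) ^ s * ∑ y ∈ range (x + 1), f y * g (x - y)) atTop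
      (𝓝 (a * ℓg + ℓf * b)) := by
  have hsplit : ∀ x, ∑ y ∈ range (x + 1), f y * g (x - y) =
      ∑ y ∈ range (x + 1) with 2 * y ≤ x, f y * g (x - y) +
        ∑ z ∈ range (x + 1) with 2 * z < x, g z * f (x - z) := by
    intro x
    rw [← sum_filter_add_sum_filter_not _ (fun y => 2 * y ≤ x)]
    congr 1
    refine sum_nbij' (x - ·) (x - ·) ?_ ?_ ?_ ?_ ?_ <;> intro y hy <;>
      simp only [mem_filter, mem_range] at hy ⊢
    · omega
    · omega
    · omega
    · omega
    · rw [Nat.sub_sub_self (by omega), mul_comm]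
  simp_rw [hsplit, mul_add]
  rw [mul_comm ℓf b]
  exact (tendsto_rpow_mul_sum_filter_mul hs hf hgl (fun x y => 2 * y ≤ x) (fun _ _ => id)
    fun y => eventually_ge_atTop (2 * y)).add
    (tendsto_rpow_mul_sum_filter_mul hs hg hfl (fun x y => 2 * y < x) (fun _ _ => le_of_lt)
      fun y => eventually_gt_atTop (2 * y))

theorem sum_range_mul_le_of_split {f g : ℕ → ℝ} {a b u v : ℝ} {x : ℕ} (hf0 : ∀ y, 0 ≤ f y)
    (hg0 : ∀ z, 0 ≤ g z) (hf : HasSum f a) (hg : HasSum g b) (p : ℕ → Prop) [DecidablePred p]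
    (hu0 : 0 ≤ u) (hv0 : 0 ≤ v) (hu : ∀ y ≤ x, p y → f y ≤ u)
    (hv : ∀ y ≤ x, ¬ p y → g (x - y) ≤ v) :
    ∑ y ∈ range (x + 1), f y * g (x - y) ≤ u * b + a * v := by
  rw [← sum_filter_add_sum_filter_not _ p]
  gcongr ?_ + ?_
  · calc ∑ y ∈ range (x + 1) with p y, f y * g (x - y)
        ≤ ∑ y ∈ range (x + 1), u * g (x - y) := by
          refine (sum_le_sum fun y hy => ?_).trans (sum_le_sum_of_subset_of_nonneg
            (filter_subset _ _) fun y _ _ => mul_nonneg hu0 (hg0 _))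
          rw [mem_filter, mem_range] at hy
          exact mul_le_mul_of_nonneg_right (hu y (by omega) hy.2) (hg0 _)
      _ = u * ∑ z ∈ range (x + 1), g z := by
          rw [← mul_sum, ← sum_range_reflect g, Nat.add_sub_cancel]
      _ ≤ u * b := mul_le_mul_of_nonneg_left (sum_le_hasSum _ (fun z _ => hg0 z) hg) hu0
  · calc ∑ y ∈ range (x + 1) with ¬ p y, f y * g (x - y)
        ≤ ∑ y ∈ range (x + 1), f y * v := by
          refine (sum_le_sum fun y hy => ?_).trans (sum_le_sum_of_subset_of_nonneg
            (filter_subset _ _) fun y _ _ => mul_nonneg (hf0 _) hv0)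
          rw [mem_filter, mem_range] at hy
          exact mul_le_mul_of_nonneg_left (hv y (by omega) hy.2) (hf0 _)
      _ ≤ a * v := by
          rw [← sum_mul]
          exact mul_le_mul_of_nonneg_right (sum_le_hasSum _ (fun y _ => hf0 y) hf) hv0

theorem hasSum_sum_range_mul_of_hasSum {f g : ℕ → ℝ} {a b : ℝ} (hf : HasSum f a)
    (hg : HasSum g b) : HasSum (fun x => ∑ y ∈ range (x + 1), f y * g (x - y)) (a * b) := by
  have h := hasSum_sum_range_mul_of_summable_norm (f := f) (g := g)
    (by simpa only [Real.norm_eq_abs] using hf.summable.abs)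
    (by simpa only [Real.norm_eq_abs] using hg.summable.abs)
  rwa [hf.tsum_eq, hg.tsum_eq] at h

theorem summable_add_one_rpow_mul_pow {ρ : ℝ} (hρ0 : 0 ≤ ρ) (hρ1 : ρ < 1) (s : ℝ) :
    Summable fun k : ℕ => ((k : ℝ) + 1) ^ s * ρ ^ k := by
  have hρ : ‖ρ‖ < 1 := by rwa [Real.norm_of_nonneg hρ0]
  have hpoly : Summable fun k : ℕ => ((k : ℝ) + 1) ^ ⌈s⌉₊ * ρ ^ k := by
    simp_rw [add_pow, one_pow, mul_one, sum_mul]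
    refine summable_sum fun m _ => ?_
    simpa only [mul_right_comm _ ((⌈s⌉₊.choose m : ℕ) : ℝ)] using
      (summable_pow_mul_geometric_of_norm_lt_one m hρ).mul_right ((⌈s⌉₊.choose m : ℕ) : ℝ)
  refine hpoly.of_nonneg_of_le (fun k => by positivity) fun k => ?_
  gcongr
  rw [← Real.rpow_natCast]
  exact Real.rpow_le_rpow_of_exponent_le (by linarith [k.cast_nonneg (α := ℝ)]) (Nat.le_ceil s)

theorem exists_forall_le_of_tendsto {ι : Type*} [Finite ι] {u : ι → ℕ → ℝ} {ℓ : ι → ℝ}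
    (h : ∀ i, Tendsto (u i) atTop (𝓝 (ℓ i))) : ∃ T, ∀ i x, u i x ≤ T := by
  choose t ht using fun i => (h i).bddAbove_range
  obtain ⟨T, hT⟩ := Finite.bddAbove_range t
  exact ⟨T, fun i x => (ht i ⟨x, rfl⟩).trans (hT ⟨i, rfl⟩)⟩

namespace Matrix

variable {ι l m n R : Type*}

theorem hasSum_iff [AddCommMonoid R] [TopologicalSpace R] {f : ι → Matrix m n R}
    {A : Matrix m n R} : HasSum f A ↔ ∀ i j, HasSum (fun k => f k i j) (A i j) :=
  Pi.hasSum.trans (forall_congr' fun _ => Pi.hasSum)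

variable [Fintype m]

theorem hasSum_sum_range_mul {f : ℕ → Matrix l m ℝ} {g : ℕ → Matrix m n ℝ}
    {A : Matrix l m ℝ} {B : Matrix m n ℝ} (hf : HasSum f A) (hg : HasSum g B) :
    HasSum (fun x => ∑ y ∈ range (x + 1), f y * g (x - y)) (A * B) := by
  rw [hasSum_iff] at hf hg ⊢
  intro i j
  simp only [sum_apply, mul_apply]
  convert hasSum_sum fun k _ => hasSum_sum_range_mul_of_hasSum (hf i k) (hg k j) using 1
  exact funext fun x => sum_comm

theorem mul_apply_nonneg {A : Matrix l m ℝ} {B : Matrix m n ℝ} (hA : ∀ i j, 0 ≤ A i j)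
    (hB : ∀ i j, 0 ≤ B i j) (i : l) (j : n) : 0 ≤ (A * B) i j :=
  sum_nonneg fun k _ => mul_nonneg (hA i k) (hB k j)

theorem mul_apply_le {A : Matrix l m ℝ} {B : Matrix m n ℝ} {a b : ℝ}
    (hA0 : ∀ i j, 0 ≤ A i j) (hB0 : ∀ i j, 0 ≤ B i j) (hA : ∀ i j, A i j ≤ a)
    (hB : ∀ i j, B i j ≤ b) (i : l) (j : n) : (A * B) i j ≤ Fintype.card m * (a * b) := by
  calc (A * B) i j ≤ ∑ _k : m, a * b :=
        sum_le_sum fun k _ => mul_le_mul (hA i k) (hB k j) (hB0 k j) ((hA0 i k).trans (hA i k))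
    _ = Fintype.card m * (a * b) := by simp

end Matrix

section Kernel

variable {S : Type*} [Fintype S] {s : ℝ}

theorem kconv_apply (F G : ℕ → Matrix S S ℝ) (x : ℕ) (α β : S) :
    kconv F G x α β = ∑ γ, ∑ y ∈ range (x + 1), F y α γ * G (x - y) γ β := by
  simp only [kconv, Matrix.sum_apply, Matrix.mul_apply]
  exact sum_comm

theorem tendsto_rpow_mul_kconv_apply {F G : ℕ → Matrix S S ℝ} {A B LF LG : Matrix S S ℝ}
    (hs : 0 ≤ s) (hF : HasSum F A) (hG : HasSum G B)
    (hFl : ∀ α β, Tendsto (fun x : ℕ => (x : ℝ) ^ s * F x α β) atTop (𝓝 (LF α β)))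
    (hGl : ∀ α β, Tendsto (fun x : ℕ => (x : ℝ) ^ s * G x α β) atTop (𝓝 (LG α β)))
    (α β : S) :
    Tendsto (fun x : ℕ => (x : ℝ) ^ s * kconv F G x α β) atTop
      (𝓝 ((A * LG + LF * B) α β)) := by
  rw [Matrix.hasSum_iff] at hF hG
  simp only [Matrix.add_apply, Matrix.mul_apply, ← sum_add_distrib]
  refine (tendsto_finsetSum _ fun γ _ =>
    tendsto_rpow_mul_sum_range_mul hs (hF α γ) (hG γ β) (hFl α γ) (hGl γ β)).congr fun x => ?_
  rw [kconv_apply, mul_sum]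

variable [DecidableEq S] {M : ℕ → Matrix S S ℝ} {B : Matrix S S ℝ}

theorem kpow_zero_of_ne_zero {x : ℕ} (hx : x ≠ 0) : kpow M 0 x = 0 := by
  simp [kpow, hx]

theorem kpow_succ (k : ℕ) : kpow M (k + 1) = kconv M (kpow M k) := rfl

theorem kpow_apply_nonneg (hM : ∀ x α β, 0 ≤ M x α β) (k x : ℕ) (α β : S) :
    0 ≤ kpow M k x α β := by
  induction k generalizing x α β with
  | zero =>
    by_cases hx : x = 0
    · simp [kpow, hx, Matrix.one_apply, apply_ite]
    · simp [kpow_zero_of_ne_zero hx]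
  | succ k ih =>
    rw [kpow_succ, kconv_apply]
    exact sum_nonneg fun γ _ => sum_nonneg fun y _ => mul_nonneg (hM _ _ _) (ih _ _ _)

theorem hasSum_kpow (hB : HasSum M B) (k : ℕ) : HasSum (kpow M k) (B ^ k) := by
  induction k with
  | zero => simpa [kpow] using hasSum_ite_eq 0 (1 : Matrix S S ℝ)
  | succ k ih => rw [kpow_succ, pow_succ']; exact Matrix.hasSum_sum_range_mul hB ih

/-- The derivative of `ε ↦ (B + ε • L) ^ k` at `ε = 0`. -/
noncomputable def sandwichPow (B L : Matrix S S ℝ) (k : ℕ) : Matrix S S ℝ :=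
  ∑ i ∈ range k, B ^ i * L * B ^ (k - 1 - i)

variable {L : Matrix S S ℝ}

theorem sandwichPow_succ (k : ℕ) :
    sandwichPow B L (k + 1) = L * B ^ k + B * sandwichPow B L k := by
  rw [sandwichPow, sum_range_succ', sandwichPow, mul_sum]
  simp only [pow_zero, one_mul, Nat.add_sub_cancel, Nat.sub_zero, add_comm (L * B ^ k)]
  refine congrArg (· + _) (sum_congr rfl fun i hi => ?_)
  rw [show k - (i + 1) = k - 1 - i by omega, pow_succ', mul_assoc, mul_assoc, mul_assoc]

theorem sandwichPow_apply_nonneg (hB : ∀ α β, 0 ≤ B α β) (hL : ∀ α β, 0 ≤ L α β) (k : ℕ)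
    (α β : S) : 0 ≤ sandwichPow B L k α β := by
  rw [sandwichPow, Matrix.sum_apply]
  exact sum_nonneg fun i _ => Matrix.mul_apply_nonneg
    (Matrix.mul_apply_nonneg (Matrix.pow_apply_nonneg hB i) hL) (Matrix.pow_apply_nonneg hB _) α β

theorem sandwichPow_succ_apply_le {C ρ T : ℝ} (hB : ∀ α β, 0 ≤ B α β)
    (hBC : ∀ i α β, (B ^ i) α β ≤ C * ρ ^ i) (hL0 : ∀ α β, 0 ≤ L α β) (hLT : ∀ α β, L α β ≤ T)
    (k : ℕ) (α β : S) :
    sandwichPow B L (k + 1) α β ≤ (k + 1) * (Fintype.card S ^ 2 * T * C ^ 2 * ρ ^ k) := by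
  have hpow := Matrix.pow_apply_nonneg hB
  rw [sandwichPow, Matrix.sum_apply]
  calc ∑ i ∈ range (k + 1), (B ^ i * L * B ^ (k + 1 - 1 - i)) α β
      ≤ ∑ i ∈ range (k + 1), Fintype.card S ^ 2 * T * C ^ 2 * ρ ^ k := by
        refine sum_le_sum fun i hi => ?_
        have hik : i ≤ k := Nat.lt_succ_iff.1 (mem_range.1 hi)
        calc (B ^ i * L * B ^ (k + 1 - 1 - i)) α β
            ≤ Fintype.card S * ((Fintype.card S * (C * ρ ^ i * T)) * (C * ρ ^ (k - i))) :=
              Matrix.mul_apply_le (Matrix.mul_apply_nonneg (hpow i) hL0) (hpow _)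
                (Matrix.mul_apply_le (hpow i) hL0 (hBC i) hLT) (hBC _) α β
          _ = Fintype.card S ^ 2 * T * C ^ 2 * ρ ^ k := by
              rw [← Nat.add_sub_cancel' hik, pow_add]
              simp only [Nat.add_sub_cancel_left]
              ring
    _ = (k + 1) * (Fintype.card S ^ 2 * T * C ^ 2 * ρ ^ k) := by simp

theorem hasSum_sandwichPow_succ {R : Matrix S S ℝ} (hR : HasSum (fun k => B ^ k) R) :
    HasSum (fun k => sandwichPow B L (k + 1)) (R * L * R) := by
  simpa only [sandwichPow, Nat.add_sub_cancel] using
    Matrix.hasSum_sum_range_mul (hR.mul_right L) hR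

theorem tendsto_rpow_mul_kpow_apply (hs : 0 ≤ s) (hB : HasSum M B)
    (hL : ∀ α β, Tendsto (fun x : ℕ => (x : ℝ) ^ s * M x α β) atTop (𝓝 (L α β)))
    (k : ℕ) (α β : S) :
    Tendsto (fun x : ℕ => (x : ℝ) ^ s * kpow M k x α β) atTop (𝓝 (sandwichPow B L k α β)) := by
  induction k generalizing α β with
  | zero =>
    refine tendsto_const_nhds.congr' ((eventually_ne_atTop 0).mono fun x hx => ?_)
    simp [kpow_zero_of_ne_zero hx, sandwichPow]
  | succ k ih =>
    rw [sandwichPow_succ, add_comm (L * B ^ k)]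
    exact tendsto_rpow_mul_kconv_apply hs hB (hasSum_kpow hB k) hL ih α β

theorem kpow_apply_le {J : Matrix S S ℝ} (hs : 0 ≤ s) (hM : ∀ x α β, 0 ≤ M x α β)
    (hB : HasSum M B) (hJ0 : ∀ α β, 0 ≤ J α β)
    (hJ : ∀ (x : ℕ) α β, (x : ℝ) ^ s * M x α β ≤ J α β) (k : ℕ) {x : ℕ} (hx : 1 ≤ x) (α β : S) :
    kpow M k x α β ≤ ((k : ℝ) / x) ^ s * sandwichPow B J k α β := by
  induction k generalizing x α β with
  | zero => simp [kpow_zero_of_ne_zero (by omega : x ≠ 0), sandwichPow]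
  | succ k ih =>
    have hB0 : ∀ α β, 0 ≤ B α β := fun α β =>
      (Matrix.hasSum_iff.1 hB α β).nonneg fun x => hM x α β
    have hx' : (0 : ℝ) < x := by exact_mod_cast hx
    set c := (((k + 1 : ℕ) : ℝ) / x) ^ s
    have hc0 : 0 ≤ c := by positivity
    rw [kpow_succ, kconv_apply, sandwichPow_succ, Matrix.add_apply, mul_add, Matrix.mul_apply,
      Matrix.mul_apply, mul_sum, mul_sum, ← sum_add_distrib]
    refine sum_le_sum fun γ _ => ?_
    -- Either `y ≥ x / (k + 1)`, or `x - y ≥ k x / (k + 1)`: in both cases the factor carrying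
    -- the tail costs at most `((k + 1) / x) ^ s`, so the constants do not compound.
    have key := sum_range_mul_le_of_split (x := x) (fun y => hM y α γ)
      (fun z => kpow_apply_nonneg hM k z γ β) (Matrix.hasSum_iff.1 hB α γ)
      (Matrix.hasSum_iff.1 (hasSum_kpow hB k) γ β) (fun y => x ≤ (k + 1) * y)
      (mul_nonneg hc0 (hJ0 α γ))
      (mul_nonneg hc0 (sandwichPow_apply_nonneg hB0 hJ0 k γ β)) ?_ ?_
    · linarith
    · intro y _ hy
      have hy' : (0 : ℝ) < y := by
        exact_mod_cast Nat.pos_of_ne_zero fun h => by rw [h, mul_zero] at hy; omega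
      calc M y α γ = (1 / (y : ℝ)) ^ s * ((y : ℝ) ^ s * M y α γ) := by
            rw [Real.div_rpow zero_le_one hy'.le, Real.one_rpow, ← mul_assoc,
              one_div_mul_cancel (Real.rpow_pos_of_pos hy' s).ne', one_mul]
        _ ≤ c * J α γ := by
            refine mul_le_mul (Real.rpow_le_rpow (by positivity) ?_ hs) (hJ y α γ)
              (mul_nonneg (by positivity) (hM y α γ)) hc0
            rw [div_le_div_iff₀ hy' hx']
            rw [one_mul]
            exact_mod_cast hy
    · intro y _ hy
      have hky : (k + 1) * y < x := not_le.1 hy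
      have hyx : y < x := lt_of_le_of_lt (Nat.le_mul_of_pos_left y k.succ_pos) hky
      refine (ih (by omega) γ β).trans (mul_le_mul_of_nonneg_right ?_
        (sandwichPow_apply_nonneg hB0 hJ0 k γ β))
      refine Real.rpow_le_rpow (by positivity) ?_ hs
      rw [div_le_div_iff₀ (by exact_mod_cast Nat.sub_pos_of_lt hyx) hx', Nat.cast_sub hyx.le]
      have : ((k : ℝ) + 1) * y ≤ x := by exact_mod_cast hky.le
      push_cast
      nlinarith

theorem rpow_mul_kpow_succ_apply_le {T C ρ : ℝ} (hs : 0 ≤ s) (hM : ∀ x α β, 0 ≤ M x α β)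
    (hB : HasSum M B) (hBC : ∀ i α β, (B ^ i) α β ≤ C * ρ ^ i)
    (hT : ∀ (x : ℕ) α β, (x : ℝ) ^ s * M x α β ≤ T) (k : ℕ) {x : ℕ} (hx : 1 ≤ x) (α β : S) :
    (x : ℝ) ^ s * kpow M (k + 1) x α β ≤
      Fintype.card S ^ 2 * T * C ^ 2 * (((k : ℝ) + 1) ^ (s + 1) * ρ ^ k) := by
  have hx' : (0 : ℝ) < x := by exact_mod_cast hx
  have hT0 : 0 ≤ T := (mul_nonneg (by positivity) (hM 0 α α)).trans (hT 0 α α)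
  have hB0 : ∀ α β, 0 ≤ B α β := fun α β =>
    (Matrix.hasSum_iff.1 hB α β).nonneg fun x => hM x α β
  set J : Matrix S S ℝ := Matrix.of fun _ _ => T
  calc (x : ℝ) ^ s * kpow M (k + 1) x α β
      ≤ (x : ℝ) ^ s * ((((k + 1 : ℕ) : ℝ) / x) ^ s * sandwichPow B J (k + 1) α β) := by
        gcongr
        exact kpow_apply_le hs hM hB (fun _ _ => hT0) hT (k + 1) hx α β
    _ = ((k : ℝ) + 1) ^ s * sandwichPow B J (k + 1) α β := by
        rw [Real.div_rpow (by positivity) hx'.le, ← mul_assoc,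
          mul_div_cancel₀ _ (Real.rpow_pos_of_pos hx' s).ne']
        push_cast
        rfl
    _ ≤ ((k : ℝ) + 1) ^ s * ((k + 1) * (Fintype.card S ^ 2 * T * C ^ 2 * ρ ^ k)) := by
        gcongr
        exact sandwichPow_succ_apply_le hB0 hBC (fun _ _ => hT0) (fun _ _ => le_rfl) k α β
    _ = _ := by
        rw [Real.rpow_add_one (by positivity)]
        ring

end Kernel

/-- Strictly delocalized asymptotics: if the total-mass matrix `B` has spectral radius
`< 1` (geometric decay of its powers), then `Z_{α,β}(x) := Σ_{k ≥ 1}[M^{*k}]_{α,β}(x)`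
satisfies `x^{3/2} Z_{α,β}(x) → [(1-B)^{-1} L (1-B)^{-1}]_{α,β}`, where
`(1-B)^{-1} = Σ_k B^k` entrywise. -/
theorem strictly_delocalized_partition_asymptotics
    {S : Type*} [Fintype S] [DecidableEq S]
    (M : ℕ → Matrix S S ℝ) (L B R : Matrix S S ℝ)
    (hM : ∀ x α β, 0 ≤ M x α β)
    (htail : ∀ α β, Filter.Tendsto (fun x : ℕ => (x : ℝ) ^ ((3 : ℝ) / 2) * M x α β)
      Filter.atTop (nhds (L α β)))
    (hB : ∀ α β, HasSum (fun x : ℕ => M x α β) (B α β))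
    (hspec : ∃ ρ : ℝ, ρ < 1 ∧ ∃ C : ℝ, ∀ (k : ℕ) (α β : S), (B ^ k) α β ≤ C * ρ ^ k)
    (hR : ∀ α β, HasSum (fun k : ℕ => (B ^ k) α β) (R α β)) :
    ∀ α β : S,
      Filter.Tendsto
        (fun x : ℕ => (x : ℝ) ^ ((3 : ℝ) / 2) * ∑' k : ℕ, (kpow M (k + 1)) x α β)
        Filter.atTop (nhds ((R * L * R) α β)) := by
  intro α β
  obtain ⟨ρ, hρ1, C, hC⟩ := hspec
  have hB' : HasSum M B := Matrix.hasSum_iff.2 hB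
  have hρ0 : 0 ≤ ρ := by
    have h1 : 1 ≤ C := by simpa using hC 0 α α
    have h2 : 0 ≤ C * ρ := ((hB α α).nonneg fun x => hM x α α).trans (by simpa using hC 1 α α)
    nlinarith
  obtain ⟨T, hT⟩ := exists_forall_le_of_tendsto fun p : S × S => htail p.1 p.2
  have hbound : ∀ᶠ x : ℕ in atTop, ∀ k, ‖(x : ℝ) ^ ((3 : ℝ) / 2) * kpow M (k + 1) x α β‖ ≤
      Fintype.card S ^ 2 * T * C ^ 2 * (((k : ℝ) + 1) ^ ((3 : ℝ) / 2 + 1) * ρ ^ k) :=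
    (eventually_ge_atTop 1).mono fun x hx k => by
      rw [Real.norm_of_nonneg (mul_nonneg (by positivity) (kpow_apply_nonneg hM _ _ _ _))]
      exact rpow_mul_kpow_succ_apply_le (by norm_num) hM hB' hC (fun x a b => hT (a, b) x) k
        hx α β
  have hRLR := Matrix.hasSum_iff.1
    (hasSum_sandwichPow_succ (L := L) (Matrix.hasSum_iff.2 hR)) α β
  simpa only [hRLR.tsum_eq, tsum_mul_left] using tendsto_tsum_of_dominated_convergence
    ((summable_add_one_rpow_mul_pow hρ0 hρ1 _).mul_left _)
    (fun k => tendsto_rpow_mul_kpow_apply (by norm_num) hB' htail (k + 1) α β) hbound
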